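/- If {α₁, α₂, ..., α_ℓ} ⊆ Φ⁺ is a ℤ-basis of the root lattice Q_Φ and α_i − α_j is not a root for all i < j, then {α₁, α₂, ..., α_ℓ} is the set of simple roots in Φ⁺. -/

import Mathlib

/-!
The `α i` are pairwise obtuse, since for roots `a ≠ b` with `⟪a, b⟫ > 0` the difference `a - b` is
a root. Writing a positive root in the lattice basis, a positive root with a negative coordinate
always produces another one whose coordinate vector has smaller `ℓ¹`-norm, so by infinite descent
there is none.
-/

open scoped RealInnerProductSpace

/-- A (reduced) crystallographic root system in a real inner product space. -/
def IsCrystRootSystem {V : Type*} [NormedAddCommGroup V] [InnerProductSpace ℝ V]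
    (Φ : Set V) : Prop :=
  Φ.Finite ∧ (∀ α ∈ Φ, α ≠ 0) ∧ (∀ α ∈ Φ, -α ∈ Φ) ∧
  (∀ α ∈ Φ, ∀ c : ℝ, c • α ∈ Φ → c = 1 ∨ c = -1) ∧
  (∀ α ∈ Φ, ∀ β ∈ Φ, β - (2 * ⟪α, β⟫ / ⟪α, α⟫) • α ∈ Φ) ∧
  (∀ α ∈ Φ, ∀ β ∈ Φ, ∃ n : ℤ, 2 * ⟪α, β⟫ / ⟪α, α⟫ = (n : ℝ))

/-- `Φpos` is a positive system of `Φ`: the roots on the positive side of a linear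
functional not vanishing on any root. -/
def IsPositiveSystem {V : Type*} [NormedAddCommGroup V] [InnerProductSpace ℝ V]
    (Φ Φpos : Set V) : Prop :=
  ∃ f : V →ₗ[ℝ] ℝ, (∀ α ∈ Φ, f α ≠ 0) ∧ Φpos = {α ∈ Φ | 0 < f α}

namespace IsCrystRootSystem

variable {V : Type*} [NormedAddCommGroup V] [InnerProductSpace ℝ V] {Φ : Set V} {a b : V}

theorem neg_mem (hΦ : IsCrystRootSystem Φ) (ha : a ∈ Φ) : -a ∈ Φ :=
  hΦ.2.2.1 a ha

theorem add_mem_or_inner_self_le_neg_inner (hΦ : IsCrystRootSystem Φ) (ha : a ∈ Φ)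
    (hb : b ∈ Φ) (hab : ⟪a, b⟫ < 0) : a + b ∈ Φ ∨ ⟪a, a⟫ ≤ -⟪a, b⟫ := by
  obtain ⟨-, hnz, -, -, hrefl, hcryst⟩ := hΦ
  obtain ⟨n, hn⟩ := hcryst a ha b hb
  have haa : 0 < ⟪a, a⟫ := real_inner_self_pos.2 (hnz a ha)
  have hn_neg : n < 0 := by
    have : (n : ℝ) < 0 := hn ▸ div_neg_of_neg_of_pos (by linarith) haa
    exact_mod_cast this
  obtain rfl | hn_le : n = -1 ∨ n ≤ -2 := by omega
  · left
    have := hrefl a ha b hb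
    rw [hn] at this
    simpa [add_comm] using this
  · right
    have : (n : ℝ) ≤ -2 := by exact_mod_cast hn_le
    rw [← hn, div_le_iff₀ haa] at this
    linarith

/-- If neither Cartan integer of the pair is `-1`, both are at most `-2`, which forces
`‖a + b‖² ≤ 0`. -/
theorem add_mem_of_inner_neg (hΦ : IsCrystRootSystem Φ) (ha : a ∈ Φ) (hb : b ∈ Φ)
    (hab : ⟪a, b⟫ < 0) (hne : b ≠ -a) : a + b ∈ Φ := by
  rcases hΦ.add_mem_or_inner_self_le_neg_inner ha hb hab with h | haa
  · exact h
  rcases hΦ.add_mem_or_inner_self_le_neg_inner hb ha (by rwa [real_inner_comm]) with h | hbb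
  · rwa [add_comm]
  rw [real_inner_comm a b] at hbb
  have : ⟪a + b, a + b⟫ ≤ 0 := by rw [real_inner_add_add_self]; linarith
  exact absurd (eq_neg_of_add_eq_zero_right (real_inner_self_nonpos.1 this)) hne

theorem sub_mem_of_inner_pos (hΦ : IsCrystRootSystem Φ) (ha : a ∈ Φ) (hb : b ∈ Φ)
    (hab : 0 < ⟪a, b⟫) (hne : a ≠ b) : a - b ∈ Φ := by
  rw [sub_eq_add_neg]
  refine hΦ.add_mem_of_inner_neg ha (hΦ.neg_mem hb) ?_ (by rwa [Ne, neg_inj, eq_comm])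
  rwa [inner_neg_right, neg_lt_zero]

theorem inner_nonpos_of_sub_notMem (hΦ : IsCrystRootSystem Φ) (ha : a ∈ Φ) (hb : b ∈ Φ)
    (hne : a ≠ b) (hab : a - b ∉ Φ) : ⟪a, b⟫ ≤ 0 :=
  not_lt.1 fun h => hab (hΦ.sub_mem_of_inner_pos ha hb h hne)

end IsCrystRootSystem

section ObtuseFamily

variable {V ι : Type*} [NormedAddCommGroup V] [InnerProductSpace ℝ V] [Fintype ι] {α : ι → V}

theorem inner_sum_smul_sum_smul_nonpos (hα : Pairwise fun i j => ⟪α i, α j⟫ ≤ 0)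
    {a b : ι → ℝ} (ha : 0 ≤ a) (hb : 0 ≤ b) (hab : ∀ i, a i * b i = 0) :
    ⟪∑ i, a i • α i, ∑ j, b j • α j⟫ ≤ 0 := by
  simp_rw [sum_inner, inner_sum, real_inner_smul_left, real_inner_smul_right]
  refine Finset.sum_nonpos fun i _ => Finset.sum_nonpos fun j _ => ?_
  rcases eq_or_ne i j with rfl | hij
  · rw [← mul_assoc, hab i, zero_mul]
  · exact mul_nonpos_of_nonneg_of_nonpos (ha i) (mul_nonpos_of_nonneg_of_nonpos (hb j) (hα hij))

theorem exists_pos_inner_pos_of_inner_sum_pos {v : V} {a : ι → ℝ} (ha : 0 ≤ a)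
    (h : 0 < ⟪v, ∑ i, a i • α i⟫) : ∃ i, 0 < a i ∧ 0 < ⟪v, α i⟫ := by
  by_contra! hcon
  refine h.not_ge ?_
  rw [inner_sum]
  refine Finset.sum_nonpos fun i _ => ?_
  rw [real_inner_smul_right]
  rcases (ha i).lt_or_eq with hai | hai
  · exact mul_nonpos_of_nonneg_of_nonpos (ha i) (hcon i hai)
  · simp [← hai]

/-- Splitting `γ = p - m` into its positive and negative parts, `⟪γ, p⟫ ≥ ‖p‖² > 0`. -/
theorem exists_pos_coeff_inner_pos (hα : Pairwise fun i j => ⟪α i, α j⟫ ≤ 0)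
    (f : V →ₗ[ℝ] ℝ) (hfα : ∀ i, 0 < f (α i)) {c : ι → ℝ} (hc : 0 < f (∑ i, c i • α i)) :
    ∃ i, 0 < c i ∧ 0 < ⟪∑ j, c j • α j, α i⟫ := by
  set p := ∑ i, c⁺ i • α i
  set m := ∑ i, c⁻ i • α i
  have hpm : ∑ i, c i • α i = p - m := by
    rw [← Finset.sum_sub_distrib]
    exact Finset.sum_congr rfl fun i _ => by rw [← sub_smul, ← Pi.sub_apply, posPart_sub_negPart]
  have hfm : 0 ≤ f m := by
    simp only [m, map_sum, map_smul, smul_eq_mul]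
    exact Finset.sum_nonneg fun i _ => mul_nonneg (negPart_nonneg _) (hfα i).le
  have hp : p ≠ 0 := by
    rintro hp
    rw [hpm, hp, map_sub, map_zero] at hc
    linarith
  have hmp : ⟪m, p⟫ ≤ 0 := by
    refine inner_sum_smul_sum_smul_nonpos hα (fun i => negPart_nonneg _)
      (fun i => posPart_nonneg _) fun i => ?_
    rcases le_total (c i) 0 with h | h
    · simp [posPart_eq_zero.2 h]
    · simp [negPart_eq_zero.2 h]
  have hγp : 0 < ⟪∑ j, c j • α j, p⟫ := by
    rw [hpm, inner_sub_left]
    linarith [real_inner_self_pos.2 hp]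
  obtain ⟨i, hci, hi⟩ := exists_pos_inner_pos_of_inner_sum_pos (fun i => posPart_nonneg (c i)) hγp
  exact ⟨i, posPart_pos_iff.1 hci, hi⟩

theorem exists_pos_coeff_inner_neg (hα : Pairwise fun i j => ⟪α i, α j⟫ ≤ 0) {d : ι → ℝ}
    (hd : 0 ≤ d) {i : ι} (hdi : d i = 0) (hne : ∑ k, d k • α k ≠ 0) :
    ∃ j, 0 < d j ∧ ⟪α i - ∑ k, d k • α k, α j⟫ < 0 := by
  set v := ∑ k, d k • α k
  have hiv : ⟪α i, v⟫ ≤ 0 := by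
    rw [inner_sum]
    refine Finset.sum_nonpos fun k _ => ?_
    rw [real_inner_smul_right]
    rcases eq_or_ne i k with rfl | hik
    · simp [hdi]
    · exact mul_nonpos_of_nonneg_of_nonpos (hd k) (hα hik)
  have hv : 0 < ⟪v - α i, v⟫ := by
    rw [inner_sub_left]
    linarith [real_inner_self_pos.2 hne]
  obtain ⟨j, hj, h⟩ := exists_pos_inner_pos_of_inner_sum_pos hd hv
  refine ⟨j, hj, ?_⟩
  rw [← neg_sub, inner_neg_left]
  linarith

end ObtuseFamily

section IntegerCoordinates

variable {V ι : Type*} [NormedAddCommGroup V] [InnerProductSpace ℝ V] [Fintype ι]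
  {Φ : Set V} {α : ι → V}

theorem linearCombination_int_eq_sum_intCast_smul (c : ι → ℤ) :
    Fintype.linearCombination ℤ α c = ∑ i, (c i : ℝ) • α i := by
  simp [Fintype.linearCombination_apply, Int.cast_smul_eq_zsmul]

theorem exists_linearCombination_eq_of_basis {M : Type*} [AddCommGroup M] {s : Set M}
    {v : ι → M} (b : Module.Basis ι ℤ (Submodule.span ℤ s)) (hb : ∀ i, (b i : M) = v i) {x : M}
    (hx : x ∈ Submodule.span ℤ s) : ∃ c : ι → ℤ, Fintype.linearCombination ℤ v c = x := by
  refine ⟨b.repr ⟨x, hx⟩, ?_⟩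
  simpa only [Fintype.linearCombination_apply, Submodule.coe_sum, Submodule.coe_smul, hb] using
    congrArg Subtype.val (b.sum_repr ⟨x, hx⟩)

variable [DecidableEq ι]

theorem sum_natAbs_add_single_lt {c : ι → ℤ} {i : ι} {s : ℤ}
    (h : (c i + s).natAbs < (c i).natAbs) :
    ∑ j, ((c + Pi.single i s : ι → ℤ) j).natAbs < ∑ j, (c j).natAbs := by
  refine Finset.sum_lt_sum (fun j _ => ?_) ⟨i, Finset.mem_univ i, by simpa using h⟩
  rcases eq_or_ne j i with rfl | hj
  · simpa using h.le
  · simp [hj]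

/-- Here `α i - γ` is a positive root supported away from `α i`, so `⟪γ, α j⟫ < 0` for some `j`
in its support; then `γ + α j` is a root, and its coordinates cannot all be nonnegative, since
otherwise `γ = α i - α j`. -/
theorem exists_smaller_of_le_single (hΦ : IsCrystRootSystem Φ) (f : V →ₗ[ℝ] ℝ)
    (hαΦ : ∀ i, α i ∈ Φ) (hfα : ∀ i, 0 < f (α i))
    (hobt : Pairwise fun i j => ⟪α i, α j⟫ ≤ 0) (hdiff : Pairwise fun i j => α i - α j ∉ Φ)
    {c : ι → ℤ} {i : ι} (hc : Fintype.linearCombination ℤ α c ∈ Φ)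
    (hfc : 0 < f (Fintype.linearCombination ℤ α c)) (hne : Fintype.linearCombination ℤ α c ≠ α i)
    (hci : 0 < c i) (hle : c ≤ Pi.single i 1) :
    ∃ c' : ι → ℤ, ∑ j, (c' j).natAbs < ∑ j, (c j).natAbs ∧
      Fintype.linearCombination ℤ α c' ∈ Φ ∧ 0 < f (Fintype.linearCombination ℤ α c') ∧
      ¬ 0 ≤ c' := by
  set γ := Fintype.linearCombination ℤ α c
  set d : ι → ℝ := fun k => ((Pi.single i 1 - c : ι → ℤ) k : ℤ)
  have hd : 0 ≤ d := fun k => by simpa [d] using hle k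
  have hdi : d i = 0 := by
    have := hle i
    simp only [d, Pi.sub_apply, Pi.single_eq_same, Int.cast_eq_zero] at this ⊢
    omega
  have hγd : ∑ k, d k • α k = α i - γ := by
    rw [← linearCombination_int_eq_sum_intCast_smul, map_sub,
      Fintype.linearCombination_apply_single, one_smul]
  obtain ⟨j, hdj, hγj⟩ := exists_pos_coeff_inner_neg hobt hd hdi
    (by rw [hγd]; exact sub_ne_zero.2 hne.symm)
  rw [hγd, sub_sub_cancel] at hγj
  have hji : j ≠ i := by rintro rfl; exact hdj.ne' hdi
  have hcj : c j < 0 := by simpa [d, hji] using hdj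
  have hfj := hfα j
  have hadd : Fintype.linearCombination ℤ α (c + Pi.single j 1) = γ + α j := by
    rw [map_add, Fintype.linearCombination_apply_single, one_smul]
  refine ⟨c + Pi.single j 1, sum_natAbs_add_single_lt (by omega), ?_, ?_, fun h => ?_⟩
  · rw [hadd]
    refine hΦ.add_mem_of_inner_neg hc (hαΦ j) hγj fun h => ?_
    have := congrArg f h
    rw [map_neg] at this
    linarith
  · rw [hadd, map_add]
    linarith
  · have hcij : c = Pi.single i 1 - Pi.single j 1 := by
      ext k
      have h1 := hle k
      have h2 := h k
      simp only [Pi.zero_apply, Pi.add_apply, Pi.sub_apply, Pi.single_apply] at h1 h2 ⊢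
      split_ifs at h1 h2 ⊢ with hki hkj hkj <;> subst_vars <;> omega
    have hγ : γ = α i - α j := by
      simp only [γ, hcij, map_sub, Fintype.linearCombination_apply_single, one_smul]
    exact hdiff hji.symm (hγ ▸ hc)

/-- Take `i` with `c i > 0` and `⟪γ, α i⟫ > 0`. Then `γ - α i` is a root with smaller `ℓ¹`-norm,
and so is its negative; whichever of the two is positive is a counterexample unless `γ - α i` is
negative with `α i - γ` having nonnegative coordinates, the case of
`exists_smaller_of_le_single`. -/
theorem exists_smaller_of_not_nonneg (hΦ : IsCrystRootSystem Φ) (f : V →ₗ[ℝ] ℝ)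
    (hf : ∀ γ ∈ Φ, f γ ≠ 0) (hαΦ : ∀ i, α i ∈ Φ) (hfα : ∀ i, 0 < f (α i))
    (hli : LinearIndependent ℤ α) (hobt : Pairwise fun i j => ⟪α i, α j⟫ ≤ 0)
    (hdiff : Pairwise fun i j => α i - α j ∉ Φ)
    {c : ι → ℤ} (hc : Fintype.linearCombination ℤ α c ∈ Φ)
    (hfc : 0 < f (Fintype.linearCombination ℤ α c)) (hneg : ¬ 0 ≤ c) :
    ∃ c' : ι → ℤ, ∑ j, (c' j).natAbs < ∑ j, (c j).natAbs ∧
      Fintype.linearCombination ℤ α c' ∈ Φ ∧ 0 < f (Fintype.linearCombination ℤ α c') ∧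
      ¬ 0 ≤ c' := by
  obtain ⟨i, hci, hγi⟩ : ∃ i, 0 < c i ∧ 0 < ⟪Fintype.linearCombination ℤ α c, α i⟫ := by
    rw [linearCombination_int_eq_sum_intCast_smul] at hfc ⊢
    simpa using exists_pos_coeff_inner_pos hobt f hfα hfc
  set γ := Fintype.linearCombination ℤ α c
  have hne : γ ≠ α i := by
    intro h
    have : c = Pi.single i 1 := hli.fintypeLinearCombination_injective <| by
      rw [Fintype.linearCombination_apply_single, one_smul]
      exact h
    exact hneg (this ▸ Pi.single_nonneg.2 zero_le_one)
  set c' := c + Pi.single i (-1)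
  have hc' : Fintype.linearCombination ℤ α c' = γ - α i := by
    rw [map_add, Fintype.linearCombination_apply_single, neg_one_smul, sub_eq_add_neg]
  have hS : ∑ j, (c' j).natAbs < ∑ j, (c j).natAbs := sum_natAbs_add_single_lt (by omega)
  have hsub : γ - α i ∈ Φ := hΦ.sub_mem_of_inner_pos hc (hαΦ i) hγi hne
  rcases (hf _ hsub).lt_or_gt with hfs | hfs
  · by_cases hd : 0 ≤ -c'
    · refine exists_smaller_of_le_single hΦ f hαΦ hfα hobt hdiff hc hfc hne hci fun k => ?_
      have := hd k
      rcases eq_or_ne k i with rfl | hk <;> simp_all [c']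
    · refine ⟨-c', by simpa using hS, ?_, ?_, hd⟩
      · rw [map_neg, hc']
        exact hΦ.neg_mem hsub
      · rw [map_neg, hc', map_neg]
        linarith
  · refine ⟨c', hS, hc' ▸ hsub, hc' ▸ hfs, fun h => hneg ?_⟩
    have : c = c' + Pi.single i 1 := by
      rw [add_assoc, ← Pi.single_add, neg_add_cancel, Pi.single_zero, add_zero]
    exact this ▸ add_nonneg h (Pi.single_nonneg.2 zero_le_one)

theorem nonneg_of_linearCombination_mem (hΦ : IsCrystRootSystem Φ) (f : V →ₗ[ℝ] ℝ)
    (hf : ∀ γ ∈ Φ, f γ ≠ 0) (hαΦ : ∀ i, α i ∈ Φ) (hfα : ∀ i, 0 < f (α i))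
    (hli : LinearIndependent ℤ α) (hobt : Pairwise fun i j => ⟪α i, α j⟫ ≤ 0)
    (hdiff : Pairwise fun i j => α i - α j ∉ Φ)
    {c : ι → ℤ} (hc : Fintype.linearCombination ℤ α c ∈ Φ)
    (hfc : 0 < f (Fintype.linearCombination ℤ α c)) : 0 ≤ c := by
  induction hS : ∑ j, (c j).natAbs using Nat.strong_induction_on generalizing c with
  | _ n ih =>
    by_contra hneg
    obtain ⟨c', hlt, hc', hfc', hneg'⟩ :=
      exists_smaller_of_not_nonneg hΦ f hf hαΦ hfα hli hobt hdiff hc hfc hneg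
    exact hneg' (ih _ (hS ▸ hlt) hc' hfc' rfl)

end IntegerCoordinates

/-- If `α₁, …, α_ℓ ∈ Φ⁺` form a `ℤ`-basis of the root lattice and `α i - α j ∉ Φ` for
`i < j`, then the `α i` are the simple roots of `Φ⁺`, i.e. every positive root is a
nonnegative integer combination of them. -/
theorem statement1 {V : Type*} [NormedAddCommGroup V] [InnerProductSpace ℝ V]
    (Φ Φpos : Set V) (hΦ : IsCrystRootSystem Φ) (hpos : IsPositiveSystem Φ Φpos)
    (ℓ : ℕ) (α : Fin ℓ → V) (hα : ∀ i, α i ∈ Φpos)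
    (hbasis : ∃ b : Module.Basis (Fin ℓ) ℤ (Submodule.span ℤ Φ), ∀ i, (b i : V) = α i)
    (hdiff : ∀ i j : Fin ℓ, i < j → α i - α j ∉ Φ) :
    ∀ β ∈ Φpos, ∃ c : Fin ℓ → ℕ, β = ∑ i, (c i : ℝ) • α i := by
  obtain ⟨f, hf, rfl⟩ := hpos
  obtain ⟨b, hb⟩ := hbasis
  have hαΦ : ∀ i, α i ∈ Φ := fun i => (hα i).1
  have hli : LinearIndependent ℤ α := by
    have := b.linearIndependent.map' _ (Submodule.ker_subtype (Submodule.span ℤ Φ))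
    rwa [show (Submodule.span ℤ Φ).subtype ∘ b = α from funext hb] at this
  have hdiff' : Pairwise fun i j => α i - α j ∉ Φ := fun i j hij h => by
    rcases hij.lt_or_gt with hlt | hgt
    · exact hdiff i j hlt h
    · exact hdiff j i hgt (by simpa using hΦ.neg_mem h)
  have hobt : Pairwise fun i j => ⟪α i, α j⟫ ≤ 0 := fun i j hij =>
    hΦ.inner_nonpos_of_sub_notMem (hαΦ i) (hαΦ j) (hli.injective.ne hij) (hdiff' hij)
  rintro β ⟨hβ, hfβ⟩
  obtain ⟨c, rfl⟩ := exists_linearCombination_eq_of_basis b hb (Submodule.subset_span hβ)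
  have hc := nonneg_of_linearCombination_mem hΦ f hf hαΦ (fun i => (hα i).2) hli hobt hdiff'
    hβ hfβ
  refine ⟨fun i => (c i).toNat, ?_⟩
  rw [linearCombination_int_eq_sum_intCast_smul]
  refine Finset.sum_congr rfl fun i _ => ?_
  rw [← Int.cast_natCast, Int.toNat_of_nonneg (hc i)]
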